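/- Under Assumptions 1, 3 (strengthened contractivity), 4–5, 6 and 7, suppose ξ ≥ 2·N_p·ℓ̄/(1−γ) and γ·Γ_max + max{ε, ν·Γ_max}·N_p·ℓ̄/ξ ≤ ω. Then the optimal value function V*_{N_p} is a time-varying ISpS-Lyapunov function for the closed loop: there exists a class-K function λ, depending only on n, m, r, N_p, ξ, ε, ν, Γ_max and the moduli σ_{x,ia}, σ_{w,ic}, σ_{ℓ,x}, σ_Γ, such that along every closed-loop trajectory (with arbitrary disturbances w(k) ∈ 𝒲) and for every k ≥ 0: (i) x(k) ∈ 𝒳 and P_{N_p}(x(k),θ(k)) is feasible; (ii) ε·α_ℓ(‖x(k)‖) ≤ V*_{N_p}(x(k),θ(k)) ≤ ξ·α_Γ(‖x(k)‖) + ε·N_p·ℓ̄; and (iii) V*_{N_p}(x(k+1),θ(k+1)) − V*_{N_p}(x(k),θ(k)) ≤ −ε·α_ℓ(‖x(k)‖) + λ(‖w(k)‖) + ε·N_p·ℓ̄. -/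

import Mathlib

open Pointwise

noncomputable section

abbrev Vec (n : ℕ) := EuclideanSpace ℝ (Fin n)

/-- A class-K function: continuous (on `[0,∞)`), strictly increasing,
nonnegative, vanishing at `0`. -/
def ClassK (α : ℝ → ℝ) : Prop :=
  α 0 = 0 ∧ ContinuousOn α (Set.Ici 0) ∧ StrictMonoOn α (Set.Ici 0) ∧
    ∀ s, 0 ≤ s → 0 ≤ α s

/-- A class-K∞ function: class-K and unbounded. -/
def ClassKInf (α : ℝ → ℝ) : Prop :=
  ClassK α ∧ ∀ M : ℝ, ∃ s, 0 ≤ s ∧ M ≤ α s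

/-- Trajectory of the perturbed system: `φ(j; x, 𝐮, 𝐰)`. -/
def traj {n m r : ℕ} (f : Vec n → Vec m → Vec r → Vec n) (x : Vec n)
    (u : ℕ → Vec m) (w : ℕ → Vec r) : ℕ → Vec n
  | 0 => x
  | j + 1 => f (traj f x u w j) (u j) (w j)

/-- `min_{1 ≤ j ≤ q} g j`. -/
def minIcc (g : ℕ → ℝ) (q : ℕ) : ℝ := sInf (g '' Set.Icc 1 q)

/-- Pontryagin set difference `A ⊖ B`. -/
def pont {n : ℕ} (A B : Set (Vec n)) : Set (Vec n) := {x | ∀ b ∈ B, x + b ∈ A}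

/-- Data of the robust contraction-based MPC problem. -/
structure MPCSetup (n m r : ℕ) where
  /-- system dynamics -/
  f : Vec n → Vec m → Vec r → Vec n
  /-- state constraint set 𝒳 -/
  X : Set (Vec n)
  /-- input constraint set 𝒰 -/
  U : Set (Vec m)
  /-- disturbance bounds w̄ -/
  wbar : Fin r → ℝ
  /-- contractive function Γ -/
  Γ : Vec n → ℝ
  /-- moduli of continuity of f -/
  σx : Fin n → Fin n → ℝ → ℝ
  σu : Fin n → Fin m → ℝ → ℝ
  σw : Fin n → Fin r → ℝ → ℝ
  /-- modulus of continuity of Γ -/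
  σΓ : ℝ → ℝ
  /-- upper bounding K∞ function for Γ -/
  αΓ : ℝ → ℝ
  /-- contraction factor -/
  γ : ℝ
  /-- maximum prediction horizon -/
  Np : ℕ
  /-- the sets ℱ(j) -/
  Fset : ℕ → Set (Vec n)
  /-- the sets ℛ(j) -/
  Rset : ℕ → Set (Vec n)
  /-- stage cost -/
  ℓ : Vec n → Vec m → ℝ
  /-- upper bound on stage cost -/
  ℓbar : ℝ
  /-- lower bounding K function for the stage cost -/
  αℓ : ℝ → ℝ
  /-- moduli of continuity of the stage cost -/
  σℓx : ℝ → ℝ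
  σℓu : ℝ → ℝ
  /-- weight of the contraction term in the cost -/
  ξ : ℝ

namespace MPCSetup

variable {n m r : ℕ}

/-- The disturbance set 𝒲. -/
def W (S : MPCSetup n m r) : Set (Vec r) := {w | ∀ i, |w i| ≤ S.wbar i}

/-- Nominal (disturbance-free) trajectory `φ(j; x, 𝐮, 0)`. -/
def nom (S : MPCSetup n m r) (x : Vec n) (u : ℕ → Vec m) : ℕ → Vec n :=
  traj S.f x u fun _ => (0 : Vec r)

/-- Assumptions 1 (component-wise uniform continuity), 2 (constraint sets),
3 (strengthened contractivity), 4–5 (the sequences ℱ(j), ℛ(j)) and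
7 (stage cost), together with ξ > 0. -/
structure Assumptions (S : MPCSetup n m r) : Prop where
  hX_compact : IsCompact S.X
  hU_compact : IsCompact S.U
  hX_int : (interior S.X).Nonempty
  hU_int : (interior S.U).Nonempty
  -- Assumption 1
  hσx : ∀ i a, ClassK (S.σx i a)
  hσu : ∀ i b, ClassK (S.σu i b)
  hσw : ∀ i c, ClassK (S.σw i c)
  hf_cont : ∀ x ∈ S.X, ∀ u ∈ S.U, ∀ w ∈ S.W, ∀ x' ∈ S.X, ∀ u' ∈ S.U, ∀ w' ∈ S.W, ∀ i,
    |S.f x u w i - S.f x' u' w' i| ≤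
      (∑ a, S.σx i a (|x a - x' a|)) + (∑ b, S.σu i b (|u b - u' b|)) +
        ∑ c, S.σw i c (|w c - w' c|)
  -- Assumption 3 (strengthened contractivity)
  hΓ0 : S.Γ 0 = 0
  hΓpos : ∀ x, x ≠ 0 → 0 < S.Γ x
  hΓnonneg : ∀ x, 0 ≤ S.Γ x
  hσΓ : ClassK S.σΓ
  hΓuc : ∀ x ∈ S.X, ∀ x' ∈ S.X, |S.Γ x - S.Γ x'| ≤ S.σΓ ‖x - x'‖
  hαΓ : ClassKInf S.αΓ
  hΓub : ∀ x ∈ S.X, S.Γ x ≤ S.αΓ ‖x‖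
  hγ : S.γ ∈ Set.Ioo (0 : ℝ) 1
  hNp : 1 ≤ S.Np
  hcontract : ∀ x ∈ S.X, ∃ u : ℕ → Vec m, (∀ j < S.Np, u j ∈ S.U) ∧
    (∀ j ≤ S.Np, S.nom x u j ∈ pont S.X (S.Rset j)) ∧
    minIcc (fun j => S.Γ (S.nom x u j)) S.Np ≤ S.γ * S.Γ x
  -- Assumptions 4–5
  hF0 : S.Fset 0 = {z | ∀ i, |z i| ≤ ∑ a, S.σw i a (S.wbar a)}
  hR0 : S.Rset 0 = {0}
  hF : ∀ (x : Vec n) (u : ℕ → Vec m), (∀ j, u j ∈ S.U) →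
    (∀ j, S.nom x u j ∈ S.X) →
    ∀ x' : Vec n, x' - x ∈ S.Fset 0 → ∀ j, 1 ≤ j →
      S.nom x' u j ∈ {S.nom x u j} + S.Fset j
  hR : ∀ (x : Vec n) (u : ℕ → Vec m), (∀ j, u j ∈ S.U) →
    (∀ j, S.nom x u j ∈ S.X) →
    ∀ w : ℕ → Vec r, (∀ j, w j ∈ S.W) → ∀ j, 1 ≤ j →
      traj S.f x u w j ∈ {S.nom x u j} + S.Rset j
  hRNp : 0 ∈ pont S.X (S.Rset S.Np)
  hFR : ∀ j, S.Fset j + S.Rset j ⊆ S.Rset (j + 1)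
  -- Assumption 7
  hℓbar : 0 < S.ℓbar
  hℓ_bounds : ∀ x ∈ S.X, ∀ u ∈ S.U, 0 ≤ S.ℓ x u ∧ S.ℓ x u ≤ S.ℓbar
  hαℓ : ClassK S.αℓ
  hℓ_lb : ∀ x ∈ S.X, ∀ u ∈ S.U, S.αℓ ‖x‖ ≤ S.ℓ x u
  hσℓx : ClassK S.σℓx
  hσℓu : ClassK S.σℓu
  hℓ_uc : ∀ x ∈ S.X, ∀ u ∈ S.U, ∀ x' ∈ S.X, ∀ u' ∈ S.U,
    |S.ℓ x u - S.ℓ x' u'| ≤ S.σℓx ‖x - x'‖ + S.σℓu ‖u - u'‖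
  hξ : 0 < S.ξ

/-- A pair (𝐮, q) is feasible for `P_{N_p}(x, θ)`. -/
def Feasible (S : MPCSetup n m r) (x : Vec n) (u : ℕ → Vec m) (q : ℕ) : Prop :=
  q ∈ Set.Icc 1 S.Np ∧ (∀ j < q, u j ∈ S.U) ∧
    ∀ j ≤ q, S.nom x u j ∈ pont S.X (S.Rset j)

/-- Cost `V_{N_p}(x, θ, 𝐮, q)`. -/
def cost (S : MPCSetup n m r) (x : Vec n) (θ : ℝ) (u : ℕ → Vec m) (q : ℕ) : ℝ :=
  θ * ∑ j ∈ Finset.range q, S.ℓ (S.nom x u j) (u j) +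
    S.ξ * minIcc (fun j => S.Γ (S.nom x u j)) q

/-- Optimal value `V*_{N_p}(x, θ)`. -/
def Vstar (S : MPCSetup n m r) (x : Vec n) (θ : ℝ) : ℝ :=
  sInf {c | ∃ u q, S.Feasible x u q ∧ c = S.cost x θ u q}

/-- An optimal pair: a feasible pair attaining the optimal value, with the
smallest horizon among all feasible minimizers. -/
def OptimalPair (S : MPCSetup n m r) (x : Vec n) (θ : ℝ) (u : ℕ → Vec m) (q : ℕ) : Prop :=
  S.Feasible x u q ∧ S.cost x θ u q = S.Vstar x θ ∧
    ∀ u' q', S.Feasible x u' q' → S.cost x θ u' q' = S.Vstar x θ → q ≤ q'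

/-- The θ-update rule `f_θ`. -/
def fθ (S : MPCSetup n m r) (ε ν : ℝ) (x : Vec n) (θ' : ℝ) : ℝ :=
  if θ' < S.Γ x then θ' else max ε (ν * S.Γ x)

/-- Additional data: the RCIS Ω, the constant ω and `Γ_max := max_{x ∈ 𝒳} Γ(x)`. -/
structure Ext (S : MPCSetup n m r) where
  Ω : Set (Vec n)
  ω : ℝ
  Γmax : ℝ

/-- Assumption 6 (robust controlled invariant set) together with the
properties of ω and Γ_max. -/
structure ExtAssumptions (S : MPCSetup n m r) (E : S.Ext) : Prop where
  hΩX : E.Ω ⊆ S.X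
  hΩinv : ∀ x ∈ E.Ω, ∃ u ∈ S.U, ∀ w ∈ S.W, S.f x u w ∈ E.Ω
  hΩctrl : ∀ x ∈ E.Ω, ∃ u ∈ S.U, S.f x u 0 ∈ pont S.X (S.Rset 1)
  hΩR1 : 0 ∈ pont E.Ω (S.Rset 1)
  hω : 0 < E.ω
  hωsub : {x | S.Γ x ≤ E.ω} ⊆ pont E.Ω (S.Rset 1)
  hΓmax : IsGreatest (S.Γ '' S.X) E.Γmax
  hΓmax_pos : 0 < E.Γmax

end MPCSetup

/-!
Along the closed loop `ε ≤ θ(k) ≤ max ε Γ(x(k))` and `θ` is nonincreasing. The contractive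
candidate of Assumption 3 costs at most `θ N_p ℓ̄ + ξ γ Γ(x)`, and `N_p ℓ̄ ≤ ξ (1 - γ)` turns this
into the upper bound `ξ Γ(x) + ε N_p ℓ̄`; the first stage cost gives the lower bound.

For the decrease, let `j*` be the step where the optimal prediction attains its minimum `M` of
`Γ`. The same cost bound gives `ξ M ≤ V* ≤ ξ ω`, so the prediction at `j*` lies in `Ω`. If
`j* = 1`, the true successor is within the disturbance gain of the predicted one, so its `Γ`
exceeds `M` by at most `σ_Γ(…)` and the upper bound at time `k + 1` suffices. If `j* ≥ 2`, the
tail of the optimal input, continued inside `Ω` after `j*`, is feasible from `x(k+1)` with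
horizon `j* - 1`: Assumptions 4–5 absorb the first-step deviation into the tightening. Its
cost is `V* - θ ℓ(x, u(0))` up to the moduli of continuity of `ℓ` and `Γ` evaluated at the
propagated deviation, which yields `λ`.
-/

namespace ClassK

variable {α β : ℝ → ℝ}

theorem nonneg (h : ClassK α) {s : ℝ} (hs : 0 ≤ s) : 0 ≤ α s := h.2.2.2 s hs

theorem mono (h : ClassK α) {s t : ℝ} (hs : 0 ≤ s) (hst : s ≤ t) : α s ≤ α t :=
  h.2.2.1.monotoneOn hs (hs.trans hst) hst

protected theorem id : ClassK id :=
  ⟨rfl, continuousOn_id, strictMono_id.strictMonoOn _, fun _ hs => hs⟩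

theorem comp (hα : ClassK α) (hβ : ClassK β) : ClassK (α ∘ β) :=
  ⟨by simp [hβ.1, hα.1], hα.2.1.comp hβ.2.1 fun _ hs => hβ.nonneg hs,
    hα.2.2.1.comp hβ.2.2.1 fun _ hs => hβ.nonneg hs, fun _ hs => hα.nonneg (hβ.nonneg hs)⟩

theorem const_mul (hα : ClassK α) {c : ℝ} (hc : 0 < c) : ClassK fun s => c * α s :=
  ⟨by simp [hα.1], continuousOn_const.mul hα.2.1,
    fun _ hs _ ht hst => mul_lt_mul_of_pos_left (hα.2.2.1 hs ht hst) hc,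
    fun _ hs => mul_nonneg hc.le (hα.nonneg hs)⟩

theorem add (hα : ClassK α) (hβ : ClassK β) : ClassK fun s => α s + β s :=
  ⟨by simp [hα.1, hβ.1], hα.2.1.add hβ.2.1,
    fun _ hs _ ht hst => add_lt_add (hα.2.2.1 hs ht hst) (hβ.2.2.1 hs ht hst),
    fun _ hs => add_nonneg (hα.nonneg hs) (hβ.nonneg hs)⟩

theorem add_sum {ι : Type*} (hα : ClassK α) {t : Finset ι} {g : ι → ℝ → ℝ}
    (hg : ∀ p ∈ t, ClassK (g p)) : ClassK fun s => α s + ∑ p ∈ t, g p s := by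
  induction t using Finset.cons_induction with
  | empty => simpa using hα
  | cons a t ha ih =>
    simp_rw [Finset.sum_cons, add_left_comm _ (g a _)]
    exact ((hg a (Finset.mem_cons_self a t)).add
      (ih fun p hp => hg p (Finset.mem_cons_of_mem hp)))

theorem iterate (h : ClassK α) (k : ℕ) : ClassK α^[k] := by
  induction k with
  | zero => exact ClassK.id
  | succ k ih => exact ih.comp h

theorem iterate_le_iterate (h : ClassK α) (hα : ∀ s, 0 ≤ s → s ≤ α s) {s : ℝ} (hs : 0 ≤ s)
    {j k : ℕ} (hjk : j ≤ k) : α^[j] s ≤ α^[k] s := by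
  refine monotone_nat_of_le_succ (f := fun i => α^[i] s) (fun i => ?_) hjk
  rw [Function.iterate_succ_apply']
  exact hα _ ((h.iterate i).nonneg hs)

end ClassK

theorem EuclideanSpace.norm_le_card_mul {ι : Type*} [Fintype ι] {v : EuclideanSpace ℝ ι}
    {c : ℝ} (hc : 0 ≤ c) (h : ∀ i, |v i| ≤ c) : ‖v‖ ≤ Fintype.card ι * c := by
  refine le_of_sq_le_sq ?_ (by positivity)
  calc ‖v‖ ^ 2 = ∑ i, |v i| ^ 2 := by simp [EuclideanSpace.real_norm_sq_eq]
    _ ≤ ∑ _i : ι, c ^ 2 := by gcongr with i; exact h i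
    _ = Fintype.card ι * c ^ 2 := by simp
    _ ≤ (Fintype.card ι * c) ^ 2 := by
      rw [mul_pow]
      gcongr
      exact_mod_cast Nat.le_self_pow two_ne_zero _

theorem EuclideanSpace.abs_apply_le_norm {ι : Type*} [Fintype ι] (v : EuclideanSpace ℝ ι)
    (i : ι) : |v i| ≤ ‖v‖ :=
  PiLp.norm_apply_le v i

theorem minIcc_le (g : ℕ → ℝ) {q j : ℕ} (h1 : 1 ≤ j) (h2 : j ≤ q) : minIcc g q ≤ g j :=
  csInf_le ((Set.finite_Icc 1 q).image g).bddBelow ⟨j, ⟨h1, h2⟩, rfl⟩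

theorem le_minIcc {g : ℕ → ℝ} {q : ℕ} {c : ℝ} (hq : 1 ≤ q)
    (h : ∀ j, 1 ≤ j → j ≤ q → c ≤ g j) : c ≤ minIcc g q :=
  le_csInf ((Set.nonempty_Icc.2 hq).image g) fun _ ⟨j, ⟨hj1, hj2⟩, hj⟩ => hj ▸ h j hj1 hj2

theorem exists_eq_minIcc (g : ℕ → ℝ) {q : ℕ} (hq : 1 ≤ q) :
    ∃ j, 1 ≤ j ∧ j ≤ q ∧ g j = minIcc g q := by
  obtain ⟨j, ⟨h1, h2⟩, hj⟩ :=
    ((Set.nonempty_Icc.2 hq).image g).csInf_mem ((Set.finite_Icc 1 q).image g)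
  exact ⟨j, h1, h2, hj⟩

theorem exists_eq_add_of_mem_singleton_add {α : Type*} [Add α] {B : Set α} {a x : α}
    (h : x ∈ {a} + B) : ∃ b ∈ B, x = a + b := by
  obtain ⟨a', rfl, b, hb, rfl⟩ := Set.mem_add.1 h
  exact ⟨b, hb, rfl⟩

section Pontryagin

variable {n : ℕ} {A B C F : Set (Vec n)}

theorem mem_of_mem_pont (hB : 0 ∈ B) {x : Vec n} (hx : x ∈ pont A B) : x ∈ A := by
  simpa using hx 0 hB

theorem add_mem_pont {z φ : Vec n} (hz : z ∈ pont A C) (hφ : φ ∈ F) (hFBC : F + B ⊆ C) :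
    z + φ ∈ pont A B :=
  fun b hb => by simpa [add_assoc] using hz _ (hFBC (Set.add_mem_add hφ hb))

end Pontryagin

namespace MPCSetup

variable {n m r : ℕ}

section Trajectories

variable {S : MPCSetup n m r}

theorem zero_mem_W {w : Vec r} (hw : w ∈ S.W) : (0 : Vec r) ∈ S.W :=
  fun i => by simpa using (abs_nonneg _).trans (hw i)

@[simp] theorem nom_zero (x : Vec n) (u : ℕ → Vec m) : S.nom x u 0 = x := rfl

theorem nom_succ (x : Vec n) (u : ℕ → Vec m) (j : ℕ) :
    S.nom x u (j + 1) = S.f (S.nom x u j) (u j) 0 := rfl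

theorem nom_congr (x : Vec n) {u u' : ℕ → Vec m} {j : ℕ} (h : ∀ t < j, u t = u' t) :
    S.nom x u j = S.nom x u' j := by
  induction j with
  | zero => rfl
  | succ j ih => rw [nom_succ, nom_succ, ih fun t ht => h t (by omega), h j (by omega)]

theorem nom_add (x : Vec n) (u : ℕ → Vec m) (a t : ℕ) :
    S.nom x u (a + t) = S.nom (S.nom x u a) (fun s => u (a + s)) t := by
  induction t with
  | zero => rfl
  | succ t ih => rw [← add_assoc, nom_succ, ih, nom_succ]

theorem nom_succ_eq_nom_shift (x : Vec n) (u : ℕ → Vec m) (j : ℕ) :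
    S.nom x u (j + 1) = S.nom (S.nom x u 1) (fun s => u (s + 1)) j := by
  rw [add_comm, nom_add]
  simp_rw [add_comm 1]

end Trajectories

section ThetaUpdate

variable {S : MPCSetup n m r} {ε ν θ' : ℝ} {x : Vec n}

theorem le_fθ (h : ε ≤ θ') : ε ≤ S.fθ ε ν x θ' := by
  unfold fθ
  split_ifs
  exacts [h, le_max_left _ _]

theorem fθ_le_max (hν : ν ≤ 1) (hΓ : 0 ≤ S.Γ x) : S.fθ ε ν x θ' ≤ max ε (S.Γ x) := by
  unfold fθ
  split_ifs with h
  exacts [le_max_of_le_right h.le, max_le_max le_rfl (mul_le_of_le_one_left hΓ hν)]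

theorem fθ_le_self (hν : ν ≤ 1) (hΓ : 0 ≤ S.Γ x) (h : ε ≤ θ') : S.fθ ε ν x θ' ≤ θ' := by
  unfold fθ
  split_ifs with h'
  exacts [le_rfl, max_le h ((mul_le_of_le_one_left hΓ hν).trans (not_lt.1 h'))]

end ThetaUpdate

section ThetaSequence

variable {S : MPCSetup n m r} {ε ν : ℝ} {θ : ℕ → ℝ} {x : ℕ → Vec n}
  (hθ0 : θ 0 = max ε (ν * S.Γ (x 0)))
  (hθupd : ∀ k, θ (k + 1) = S.fθ ε ν (x (k + 1)) (θ k))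
include hθ0 hθupd

theorem le_θ_of_update (k : ℕ) : ε ≤ θ k := by
  induction k with
  | zero => exact hθ0 ▸ le_max_left _ _
  | succ k ih => exact hθupd k ▸ le_fθ ih

theorem antitone_θ_of_update (hA : S.Assumptions) (hν : ν ≤ 1) : Antitone θ :=
  antitone_nat_of_succ_le fun k =>
    hθupd k ▸ fθ_le_self hν (hA.hΓnonneg _) (le_θ_of_update hθ0 hθupd k)

theorem θ_le_max_Γ_of_update (hA : S.Assumptions) (hν : ν ≤ 1) :
    ∀ k, θ k ≤ max ε (S.Γ (x k))
  | 0 => hθ0 ▸ max_le_max le_rfl (mul_le_of_le_one_left (hA.hΓnonneg _) hν)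
  | k + 1 => hθupd k ▸ fθ_le_max hν (hA.hΓnonneg _)

theorem θ_le_max_Γmax_of_update (hA : S.Assumptions) {E : S.Ext} (hE : S.ExtAssumptions E)
    (hν : ν ∈ Set.Ioo (0 : ℝ) 1) (hx0 : x 0 ∈ S.X) (k : ℕ) : θ k ≤ max ε (ν * E.Γmax) := by
  refine (antitone_θ_of_update hθ0 hθupd hA hν.2.le k.zero_le).trans ?_
  rw [hθ0]
  exact max_le_max le_rfl (mul_le_mul_of_nonneg_left (hE.hΓmax.2 ⟨_, hx0, rfl⟩) hν.1.le)

end ThetaSequence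

section Invariance

variable {S : MPCSetup n m r} {E : S.Ext} (hE : S.ExtAssumptions E) (hW : (0 : Vec r) ∈ S.W)
include hE hW

theorem exists_nom_mem_Ω {z : Vec n} (hz : z ∈ E.Ω) :
    ∃ u : ℕ → Vec m, (∀ j, u j ∈ S.U) ∧ ∀ j, S.nom z u j ∈ E.Ω := by
  have step : ∀ p ∈ E.Ω, ∃ v ∈ S.U, S.f p v 0 ∈ E.Ω := fun p hp =>
    let ⟨v, hv, hvw⟩ := hE.hΩinv p hp
    ⟨v, hv, hvw 0 hW⟩
  choose! v hvU hvΩ using step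
  let g : ℕ → Vec n := fun j => Nat.rec z (fun _ p => S.f p (v p) 0) j
  have hg : ∀ j, g j ∈ E.Ω := fun j => by
    induction j with
    | zero => exact hz
    | succ j ih => exact hvΩ (g j) ih
  have hnom : ∀ j, S.nom z (fun t => v (g t)) j = g j := fun j => by
    induction j with
    | zero => rfl
    | succ j ih => rw [nom_succ, ih]
  exact ⟨fun j => v (g j), fun j => hvU _ (hg j), fun j => hnom j ▸ hg j⟩

theorem exists_extension {y : Vec n} {u : ℕ → Vec m} {N : ℕ} (hu : ∀ j < N, u j ∈ S.U)
    (hX : ∀ j ≤ N, S.nom y u j ∈ S.X) (hΩ : S.nom y u N ∈ E.Ω) :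
    ∃ ũ : ℕ → Vec m, (∀ j, ũ j ∈ S.U) ∧ (∀ j, S.nom y ũ j ∈ S.X) ∧ ∀ j < N, ũ j = u j := by
  obtain ⟨ue, hueU, hueΩ⟩ := exists_nom_mem_Ω hE hW hΩ
  set ũ : ℕ → Vec m := fun j => if j < N then u j else ue (j - N)
  have hhead : ∀ j ≤ N, S.nom y ũ j = S.nom y u j := fun j hj =>
    nom_congr y fun t ht => if_pos (by omega)
  have htail : ∀ t, S.nom y ũ (N + t) = S.nom (S.nom y u N) ue t := fun t => by
    rw [nom_add, hhead N le_rfl]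
    congr 1
    funext s
    simp [ũ]
  refine ⟨ũ, fun j => ?_, fun j => ?_, fun j hj => if_pos hj⟩
  · by_cases hj : j < N
    · simpa [ũ, hj] using hu j hj
    · simpa [ũ, hj] using hueU (j - N)
  · rcases le_or_gt j N with hj | hj
    · exact hhead j hj ▸ hX j hj
    · obtain ⟨t, rfl⟩ := Nat.exists_eq_add_of_lt hj
      rw [add_assoc, htail]
      exact hE.hΩX (hueΩ _)

theorem zero_mem_Rset (hA : S.Assumptions) (j : ℕ) : (0 : Vec n) ∈ S.Rset j := by
  have hR0 : (0 : Vec n) ∈ S.Rset 0 := by simp [hA.hR0]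
  have hF0 : (0 : Vec n) ∈ S.Fset 0 := by
    rw [hA.hF0]
    intro i
    simpa using Finset.sum_nonneg fun c _ => (hA.hσw i c).nonneg ((abs_nonneg _).trans (hW c))
  have hR1 : (0 : Vec n) ∈ S.Rset 1 := by simpa using hA.hFR 0 (Set.add_mem_add hF0 hR0)
  obtain ⟨u, huU, huΩ⟩ := exists_nom_mem_Ω hE hW (mem_of_mem_pont hR1 hE.hΩR1 : (0 : Vec n) ∈ E.Ω)
  rcases Nat.eq_zero_or_pos j with rfl | hj
  · exact hR0
  obtain ⟨b, hb, hb0⟩ := exists_eq_add_of_mem_singleton_add <|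
    hA.hR 0 u huU (fun t => hE.hΩX (huΩ t)) (fun _ => 0) (fun _ => hW) j hj
  change S.nom 0 u j = _ at hb0
  rwa [show b = 0 by simpa using hb0] at hb

end Invariance

section Feasibility

variable {S : MPCSetup n m r}

theorem Feasible.nom_mem (hR : ∀ j, (0 : Vec n) ∈ S.Rset j) {x : Vec n} {u : ℕ → Vec m}
    {q : ℕ} (hf : S.Feasible x u q) {j : ℕ} (hj : j ≤ q) : S.nom x u j ∈ S.X :=
  mem_of_mem_pont (hR j) (hf.2.2 j hj)

section Value

variable (hA : S.Assumptions) (hR : ∀ j, (0 : Vec n) ∈ S.Rset j)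
  {x : Vec n} {θ : ℝ} {u : ℕ → Vec m} {q : ℕ}
include hA hR

theorem Feasible.stage_nonneg (hf : S.Feasible x u q) {j : ℕ} (hj : j < q) :
    0 ≤ S.ℓ (S.nom x u j) (u j) :=
  (hA.hℓ_bounds _ (hf.nom_mem hR hj.le) _ (hf.2.1 j hj)).1

theorem Feasible.stage_le_sum (hf : S.Feasible x u q) :
    S.ℓ x (u 0) ≤ ∑ j ∈ Finset.range q, S.ℓ (S.nom x u j) (u j) :=
  Finset.single_le_sum (f := fun j => S.ℓ (S.nom x u j) (u j))
    (fun _ hj => hf.stage_nonneg hA hR (Finset.mem_range.1 hj)) (Finset.mem_range.2 hf.1.1)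

theorem Feasible.sum_stage_shift_le {x' : Vec n} {ũ : ℕ → Vec m} {N : ℕ} {D : ℝ}
    (hf : S.Feasible x u q) (hf' : S.Feasible x' ũ N) (hNq : N < q)
    (hũ : ∀ j < N, ũ j = u (j + 1)) (hdev : ∀ j < N, ‖S.nom x' ũ j - S.nom x u (j + 1)‖ ≤ D)
    (hD : 0 ≤ D) :
    ∑ j ∈ Finset.range N, S.ℓ (S.nom x' ũ j) (ũ j) ≤
      ∑ j ∈ Finset.range q, S.ℓ (S.nom x u j) (u j) - S.ℓ x (u 0) + S.Np * S.σℓx D := by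
  have hstage : ∀ j < N,
      S.ℓ (S.nom x' ũ j) (ũ j) ≤ S.ℓ (S.nom x u (j + 1)) (u (j + 1)) + S.σℓx D := by
    intro j hj
    have h := hA.hℓ_uc _ (hf'.nom_mem hR hj.le) _ (hf'.2.1 j hj) _
      (hf.nom_mem hR (j := j + 1) (by omega)) _ (hf.2.1 (j + 1) (by omega))
    rw [hũ j hj, sub_self, norm_zero, hA.hσℓu.1, add_zero] at h
    rw [hũ j hj]
    linarith [(abs_le.1 h).2, hA.hσℓx.mono (norm_nonneg _) (hdev j hj)]
  have hprefix : ∑ j ∈ Finset.range (N + 1), S.ℓ (S.nom x u j) (u j) ≤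
      ∑ j ∈ Finset.range q, S.ℓ (S.nom x u j) (u j) :=
    Finset.sum_le_sum_of_subset_of_nonneg (Finset.range_subset_range.2 hNq)
      fun j hj _ => hf.stage_nonneg hA hR (Finset.mem_range.1 hj)
  have hNNp : (N : ℝ) ≤ S.Np := by exact_mod_cast hNq.le.trans hf.1.2
  have hσ := hA.hσℓx.nonneg hD
  calc ∑ j ∈ Finset.range N, S.ℓ (S.nom x' ũ j) (ũ j)
      ≤ ∑ j ∈ Finset.range N, (S.ℓ (S.nom x u (j + 1)) (u (j + 1)) + S.σℓx D) :=
        Finset.sum_le_sum fun j hj => hstage j (Finset.mem_range.1 hj)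
    _ = ∑ j ∈ Finset.range (N + 1), S.ℓ (S.nom x u j) (u j) - S.ℓ x (u 0) + N * S.σℓx D := by
        rw [Finset.sum_add_distrib, Finset.sum_range_succ']
        simp
    _ ≤ _ := by nlinarith

theorem Feasible.mul_stage_add_le_cost (hθ : 0 ≤ θ) (hf : S.Feasible x u q) :
    θ * S.ℓ x (u 0) + S.ξ * minIcc (fun j => S.Γ (S.nom x u j)) q ≤ S.cost x θ u q := by
  have := hf.stage_le_sum hA hR
  unfold cost
  gcongr

theorem Feasible.mul_stage_le_cost (hθ : 0 ≤ θ) (hf : S.Feasible x u q) :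
    θ * S.ℓ x (u 0) ≤ S.cost x θ u q := by
  have hM := le_minIcc (g := fun j => S.Γ (S.nom x u j)) hf.1.1 fun j _ _ => hA.hΓnonneg _
  linarith [hf.mul_stage_add_le_cost hA hR hθ, mul_nonneg hA.hξ.le hM]

theorem Feasible.cost_nonneg (hθ : 0 ≤ θ) (hf : S.Feasible x u q) : 0 ≤ S.cost x θ u q :=
  (mul_nonneg hθ (hf.stage_nonneg hA hR hf.1.1)).trans (hf.mul_stage_le_cost hA hR hθ)

theorem Vstar_le_cost (hθ : 0 ≤ θ) (hf : S.Feasible x u q) : S.Vstar x θ ≤ S.cost x θ u q :=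
  csInf_le ⟨0, fun _ ⟨_, _, hf', hc⟩ => hc ▸ hf'.cost_nonneg hA hR hθ⟩ ⟨u, q, hf, rfl⟩

theorem Vstar_le_contraction (hx : x ∈ S.X) (hθ : 0 ≤ θ) :
    S.Vstar x θ ≤ θ * (S.Np * S.ℓbar) + S.ξ * (S.γ * S.Γ x) := by
  obtain ⟨u, huU, hpont, hmin⟩ := hA.hcontract x hx
  have hf : S.Feasible x u S.Np := ⟨⟨hA.hNp, le_rfl⟩, huU, hpont⟩
  have hsum : ∑ j ∈ Finset.range S.Np, S.ℓ (S.nom x u j) (u j) ≤ S.Np * S.ℓbar := by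
    simpa using Finset.sum_le_sum fun j hj =>
      (hA.hℓ_bounds _ (hf.nom_mem hR (Finset.mem_range.1 hj).le) _
        (huU j (Finset.mem_range.1 hj))).2
  refine (Vstar_le_cost hA hR hθ hf).trans ?_
  have := hA.hξ
  unfold cost
  gcongr

theorem Vstar_le_of_le_max {ε : ℝ} (hε : 0 ≤ ε) (hξ : S.Np * S.ℓbar ≤ S.ξ * (1 - S.γ))
    (hx : x ∈ S.X) (hθ : 0 ≤ θ) (hθΓ : θ ≤ max ε (S.Γ x)) :
    S.Vstar x θ ≤ S.ξ * S.Γ x + ε * S.Np * S.ℓbar := by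
  have hΓ := hA.hΓnonneg x
  have hθ' : θ ≤ ε + S.Γ x := hθΓ.trans (max_le (by linarith) (by linarith))
  have hP : 0 ≤ (S.Np : ℝ) * S.ℓbar := by have := hA.hℓbar; positivity
  nlinarith [Vstar_le_contraction hA hR hx hθ, mul_le_mul_of_nonneg_right hθ' hP,
    mul_le_mul_of_nonneg_left hξ hΓ]

theorem minIcc_le_ω {E : S.Ext} (hE : S.ExtAssumptions E) {c : ℝ}
    (hcond : S.γ * E.Γmax + c * S.Np * S.ℓbar / S.ξ ≤ E.ω) (hx : x ∈ S.X) (hθ : 0 ≤ θ)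
    (hθc : θ ≤ c) (hf : S.Feasible x u q) (hopt : S.cost x θ u q = S.Vstar x θ) :
    minIcc (fun j => S.Γ (S.nom x u j)) q ≤ E.ω := by
  have hξ := hA.hξ
  have hγ := hA.hγ.1
  have hΓ : S.Γ x ≤ E.Γmax := hE.hΓmax.2 ⟨x, hx, rfl⟩
  have hP : 0 ≤ (S.Np : ℝ) * S.ℓbar := by have := hA.hℓbar; positivity
  have hstage : 0 ≤ θ * S.ℓ x (u 0) := mul_nonneg hθ (hf.stage_nonneg hA hR hf.1.1)
  have hcond' : c * S.Np * S.ℓbar ≤ (E.ω - S.γ * E.Γmax) * S.ξ :=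
    (div_le_iff₀ hξ).1 (by linarith)
  refine le_of_mul_le_mul_left ?_ hξ
  calc S.ξ * minIcc (fun j => S.Γ (S.nom x u j)) q
      ≤ S.cost x θ u q := by linarith [hf.mul_stage_add_le_cost hA hR hθ]
    _ = S.Vstar x θ := hopt
    _ ≤ θ * (S.Np * S.ℓbar) + S.ξ * (S.γ * S.Γ x) := Vstar_le_contraction hA hR hx hθ
    _ ≤ c * (S.Np * S.ℓbar) + S.ξ * (S.γ * E.Γmax) := by gcongr
    _ ≤ S.ξ * E.ω := by linarith

end Value

end Feasibility

/- `devGain` propagates a componentwise deviation bound through one nominal step and `distGain`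
bounds the deviation caused by a disturbance of norm `s` (both by Assumption 1); the summand `s`
keeps them strictly increasing when the sums are empty. `predGain` is the resulting Euclidean
bound on the deviation after at most `N_p` steps. -/
def devGain (S : MPCSetup n m r) (s : ℝ) : ℝ := s + ∑ p : Fin n × Fin n, S.σx p.1 p.2 s

def distGain (S : MPCSetup n m r) (s : ℝ) : ℝ := s + ∑ p : Fin n × Fin r, S.σw p.1 p.2 s

def predGain (S : MPCSetup n m r) (s : ℝ) : ℝ :=
  (n + 1) * S.devGain^[S.Np] (S.distGain s)

def ispsGain (S : MPCSetup n m r) (c s : ℝ) : ℝ :=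
  c * S.Np * S.σℓx (S.predGain s) + S.ξ * S.σΓ (S.predGain s)

section Gains

variable {S : MPCSetup n m r} (hA : S.Assumptions)
include hA

theorem devGain_classK : ClassK S.devGain :=
  ClassK.id.add_sum fun p _ => hA.hσx p.1 p.2

theorem distGain_classK : ClassK S.distGain :=
  ClassK.id.add_sum fun p _ => hA.hσw p.1 p.2

theorem predGain_classK : ClassK S.predGain :=
  (((devGain_classK hA).iterate S.Np).comp (distGain_classK hA)).const_mul (by positivity)

theorem ispsGain_classK {c : ℝ} (hc : 0 < c) : ClassK (S.ispsGain c) := by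
  have hNp : (0 : ℝ) < S.Np := by exact_mod_cast hA.hNp
  exact ((hA.hσℓx.comp (predGain_classK hA)).const_mul (by positivity)).add
    ((hA.hσΓ.comp (predGain_classK hA)).const_mul hA.hξ)

theorem le_devGain {s : ℝ} (hs : 0 ≤ s) : s ≤ S.devGain s :=
  le_add_of_nonneg_right (Finset.sum_nonneg fun p _ => (hA.hσx p.1 p.2).nonneg hs)

theorem sum_le_devGain (i : Fin n) {s : ℝ} (hs : 0 ≤ s) :
    ∑ a, S.σx i a s ≤ S.devGain s := by
  refine le_add_of_nonneg_of_le hs ?_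
  rw [Fintype.sum_prod_type]
  exact Finset.single_le_sum (f := fun i => ∑ a, S.σx i a s)
    (fun i _ => Finset.sum_nonneg fun a _ => (hA.hσx i a).nonneg hs) (Finset.mem_univ i)

theorem sum_le_distGain (i : Fin n) {s : ℝ} (hs : 0 ≤ s) :
    ∑ c, S.σw i c s ≤ S.distGain s := by
  refine le_add_of_nonneg_of_le hs ?_
  rw [Fintype.sum_prod_type]
  exact Finset.single_le_sum (f := fun i => ∑ c, S.σw i c s)
    (fun i _ => Finset.sum_nonneg fun c _ => (hA.hσw i c).nonneg hs) (Finset.mem_univ i)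

variable (hW : (0 : Vec r) ∈ S.W)
include hW

theorem abs_f_sub_f_le {x : Vec n} {v : Vec m} {w : Vec r} (hx : x ∈ S.X) (hv : v ∈ S.U)
    (hw : w ∈ S.W) (i : Fin n) :
    |(S.f x v w - S.f x v 0) i| ≤ ∑ c, S.σw i c |w c| := by
  simpa [(hA.hσx i _).1, (hA.hσu i _).1] using hA.hf_cont x hx v hv w hw x hx v hv 0 hW i

theorem abs_f_sub_f_le_devGain {x x' : Vec n} {v : Vec m} {c : ℝ} (hc0 : 0 ≤ c)
    (hc : ∀ a, |(x' - x) a| ≤ c) (hx : x ∈ S.X) (hx' : x' ∈ S.X) (hv : v ∈ S.U) (i : Fin n) :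
    |(S.f x' v 0 - S.f x v 0) i| ≤ S.devGain c := by
  have hfc := hA.hf_cont x' hx' v hv 0 hW x hx v hv 0 hW i
  simp only [sub_self, abs_zero, (hA.hσu i _).1, (hA.hσw i _).1, Finset.sum_const_zero,
    add_zero] at hfc
  refine hfc.trans ((Finset.sum_le_sum fun a _ => ?_).trans (sum_le_devGain hA i hc0))
  exact (hA.hσx i a).mono (abs_nonneg _) (hc a)

theorem abs_nom_sub_le {x x' : Vec n} {u : ℕ → Vec m} {c : ℝ} (hc0 : 0 ≤ c)
    (hc : ∀ a, |(x' - x) a| ≤ c) {J : ℕ} (hu : ∀ j < J, u j ∈ S.U)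
    (hX : ∀ j < J, S.nom x u j ∈ S.X) (hX' : ∀ j < J, S.nom x' u j ∈ S.X) (i : Fin n) :
    |(S.nom x' u J - S.nom x u J) i| ≤ S.devGain^[J] c := by
  induction J generalizing i with
  | zero => exact hc i
  | succ J ih =>
    rw [Function.iterate_succ_apply', nom_succ, nom_succ]
    exact abs_f_sub_f_le_devGain hA hW (((devGain_classK hA).iterate J).nonneg hc0)
      (ih (fun j hj => hu j (by omega)) (fun j hj => hX j (by omega))
        (fun j hj => hX' j (by omega)))
      (hX J J.lt_succ_self) (hX' J J.lt_succ_self) (hu J J.lt_succ_self) i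

theorem norm_nom_sub_le_predGain {x x' : Vec n} {u : ℕ → Vec m} {s : ℝ} (hs : 0 ≤ s)
    (hc : ∀ a, |(x' - x) a| ≤ S.distGain s) {J : ℕ} (hJ : J ≤ S.Np)
    (hu : ∀ j < J, u j ∈ S.U) (hX : ∀ j < J, S.nom x u j ∈ S.X)
    (hX' : ∀ j < J, S.nom x' u j ∈ S.X) :
    ‖S.nom x' u J - S.nom x u J‖ ≤ S.predGain s := by
  have hc0 := (distGain_classK hA).nonneg hs
  have hbound : S.devGain^[J] (S.distGain s) ≤ S.devGain^[S.Np] (S.distGain s) :=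
    (devGain_classK hA).iterate_le_iterate (fun _ => le_devGain hA) hc0 hJ
  have hpos := ((devGain_classK hA).iterate S.Np).nonneg hc0
  calc ‖S.nom x' u J - S.nom x u J‖ ≤ Fintype.card (Fin n) * S.devGain^[S.Np] (S.distGain s) :=
        EuclideanSpace.norm_le_card_mul hpos fun i =>
          (abs_nom_sub_le hA hW hc0 hc hu hX hX' i).trans hbound
    _ ≤ S.predGain s := by rw [Fintype.card_fin, predGain]; gcongr; linarith

end Gains

section FirstStep

variable {S : MPCSetup n m r} (hA : S.Assumptions) (hW : (0 : Vec r) ∈ S.W)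
  (hR : ∀ j, (0 : Vec n) ∈ S.Rset j)
  {x : Vec n} {u : ℕ → Vec m} {q : ℕ} {w : Vec r}
include hA hW hR

theorem abs_succ_sub_le_distGain (hf : S.Feasible x u q) (hw : w ∈ S.W) (i : Fin n) :
    |(S.f x (u 0) w - S.nom x u 1) i| ≤ S.distGain ‖w‖ := by
  refine (abs_f_sub_f_le hA hW (hf.nom_mem hR (Nat.zero_le _)) (hf.2.1 0 hf.1.1) hw i).trans
    ((Finset.sum_le_sum fun c _ => ?_).trans (sum_le_distGain hA i (norm_nonneg w)))
  exact (hA.hσw i c).mono (abs_nonneg _) (EuclideanSpace.abs_apply_le_norm w c)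

theorem succ_sub_mem_Fset_zero (hf : S.Feasible x u q) (hw : w ∈ S.W) :
    S.f x (u 0) w - S.nom x u 1 ∈ S.Fset 0 := by
  rw [hA.hF0]
  exact fun i =>
    (abs_f_sub_f_le hA hW (hf.nom_mem hR (Nat.zero_le _)) (hf.2.1 0 hf.1.1) hw i).trans
      (Finset.sum_le_sum fun c _ => (hA.hσw i c).mono (abs_nonneg _) (hw c))

theorem succ_mem_pont (hf : S.Feasible x u q) (hw : w ∈ S.W) :
    S.f x (u 0) w ∈ pont S.X (S.Rset 0) := by
  simpa using add_mem_pont (hf.2.2 1 hf.1.1) (succ_sub_mem_Fset_zero hA hW hR hf hw) (hA.hFR 0)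

theorem Γ_succ_le (hf : S.Feasible x u q) (hw : w ∈ S.W) :
    S.Γ (S.f x (u 0) w) ≤ S.Γ (S.nom x u 1) + S.σΓ (S.predGain ‖w‖) := by
  have hdev : ‖S.f x (u 0) w - S.nom x u 1‖ ≤ S.predGain ‖w‖ := by
    simpa using norm_nom_sub_le_predGain hA hW (u := u) (norm_nonneg w)
      (abs_succ_sub_le_distGain hA hW hR hf hw) (Nat.zero_le _) (by simp) (by simp) (by simp)
  have hΓ := hA.hΓuc _ (mem_of_mem_pont (hR 0) (succ_mem_pont hA hW hR hf hw)) _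
    (hf.nom_mem hR hf.1.1)
  linarith [(abs_le.1 hΓ).2, hA.hσΓ.mono (norm_nonneg _) hdev]

end FirstStep

section Decrease

variable {S : MPCSetup n m r} (hA : S.Assumptions) {E : S.Ext} (hE : S.ExtAssumptions E)
  (hW : (0 : Vec r) ∈ S.W) (hR : ∀ j, (0 : Vec n) ∈ S.Rset j)
  {x : Vec n} {u : ℕ → Vec m} {q : ℕ} {w : Vec r}
include hA hE hW hR

theorem exists_shifted_feasible (hf : S.Feasible x u q) (hw : w ∈ S.W) {N : ℕ} (hN : 1 ≤ N)
    (hNq : N < q) (hΩ : S.nom x u (N + 1) ∈ E.Ω) :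
    ∃ ũ, S.Feasible (S.f x (u 0) w) ũ N ∧ (∀ j < N, ũ j = u (j + 1)) ∧
      ∀ j ≤ N, ‖S.nom (S.f x (u 0) w) ũ j - S.nom x u (j + 1)‖ ≤ S.predGain ‖w‖ := by
  have hNp := hf.1.2
  obtain ⟨ũ, hũU, hũX, hũ⟩ := exists_extension hE hW (y := S.nom x u 1)
    (fun j hj => hf.2.1 _ (by omega))
    (fun j hj => nom_succ_eq_nom_shift x u j ▸ hf.nom_mem hR (by omega))
    (nom_succ_eq_nom_shift x u N ▸ hΩ)
  have hhead : ∀ j ≤ N, S.nom (S.nom x u 1) ũ j = S.nom x u (j + 1) := fun j hj =>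
    (nom_congr _ fun t ht => hũ t (by omega)).trans (nom_succ_eq_nom_shift x u j).symm
  have hfeas : S.Feasible (S.f x (u 0) w) ũ N := by
    refine ⟨⟨hN, by omega⟩, fun j _ => hũU j, fun j hj => ?_⟩
    rcases Nat.eq_zero_or_pos j with rfl | hj0
    · exact succ_mem_pont hA hW hR hf hw
    obtain ⟨φ, hφ, heq⟩ := exists_eq_add_of_mem_singleton_add <|
      hA.hF _ ũ hũU hũX _ (succ_sub_mem_Fset_zero hA hW hR hf hw) j hj0
    rw [heq, hhead j hj]
    exact add_mem_pont (hf.2.2 (j + 1) (by omega)) hφ (hA.hFR j)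
  refine ⟨ũ, hfeas, hũ, fun j hj => hhead j hj ▸ ?_⟩
  exact norm_nom_sub_le_predGain hA hW (norm_nonneg w) (abs_succ_sub_le_distGain hA hW hR hf hw)
    (by omega) (fun t _ => hũU t) (fun t _ => hũX t) (fun t ht => hfeas.nom_mem hR (by omega))

theorem Vstar_succ_le_of_shift (hf : S.Feasible x u q) (hw : w ∈ S.W) {N : ℕ} (hN : 1 ≤ N)
    (hNq : N < q) (hΩ : S.nom x u (N + 1) ∈ E.Ω) {θ : ℝ} (hθ : 0 ≤ θ) :
    S.Vstar (S.f x (u 0) w) θ ≤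
      θ * (∑ j ∈ Finset.range q, S.ℓ (S.nom x u j) (u j) - S.ℓ x (u 0) +
          S.Np * S.σℓx (S.predGain ‖w‖)) +
        S.ξ * (S.Γ (S.nom x u (N + 1)) + S.σΓ (S.predGain ‖w‖)) := by
  obtain ⟨ũ, hfeas, hũ, hdev⟩ := exists_shifted_feasible hA hE hW hR hf hw hN hNq hΩ
  set x' := S.f x (u 0) w
  set D := S.predGain ‖w‖
  have hsum := hf.sum_stage_shift_le hA hR hfeas hNq hũ (fun j hj => hdev j hj.le)
    ((predGain_classK hA).nonneg (norm_nonneg w))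
  have hmin : minIcc (fun j => S.Γ (S.nom x' ũ j)) N ≤ S.Γ (S.nom x u (N + 1)) + S.σΓ D := by
    have hΓ := hA.hΓuc _ (hfeas.nom_mem hR le_rfl) _ (hf.nom_mem hR hNq)
    linarith [minIcc_le (fun j => S.Γ (S.nom x' ũ j)) hN le_rfl, (abs_le.1 hΓ).2,
      hA.hσΓ.mono (norm_nonneg _) (hdev N le_rfl)]
  refine (Vstar_le_cost hA hR hθ hfeas).trans ?_
  have := hA.hξ
  unfold cost
  gcongr

theorem Vstar_succ_le {ε c θ θ' : ℝ} (hε : 0 ≤ ε) (hξ : S.Np * S.ℓbar ≤ S.ξ * (1 - S.γ))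
    (hcond : S.γ * E.Γmax + c * S.Np * S.ℓbar / S.ξ ≤ E.ω) (hx : x ∈ S.X)
    (hf : S.Feasible x u q) (hopt : S.cost x θ u q = S.Vstar x θ) (hw : w ∈ S.W)
    (hθ' : 0 ≤ θ') (hθ'θ : θ' ≤ θ) (hθc : θ ≤ c) (hθ'Γ : θ' ≤ max ε (S.Γ (S.f x (u 0) w))) :
    S.Vstar (S.f x (u 0) w) θ' ≤
      S.Vstar x θ - θ * S.ℓ x (u 0) + S.ispsGain c ‖w‖ + ε * S.Np * S.ℓbar := by
  have hθ : 0 ≤ θ := hθ'.trans hθ'θ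
  have hξ0 := hA.hξ
  have hD := (predGain_classK hA).nonneg (norm_nonneg w)
  have hσℓ : 0 ≤ (S.Np : ℝ) * S.σℓx (S.predGain ‖w‖) := by
    have := hA.hσℓx.nonneg hD
    positivity
  have hσΓ := hA.hσΓ.nonneg hD
  have hP : 0 ≤ ε * S.Np * S.ℓbar := by have := hA.hℓbar; positivity
  have hlow := hf.mul_stage_add_le_cost hA hR hθ
  rw [hopt] at hlow
  obtain ⟨N, hN, hNq, hM⟩ := exists_eq_minIcc (fun j => S.Γ (S.nom x u j)) hf.1.1
  unfold ispsGain
  rcases hN.eq_or_lt with rfl | hN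
  · have hx' := mem_of_mem_pont (hR 0) (succ_mem_pont hA hW hR hf hw)
    have hΓ := mul_le_mul_of_nonneg_left (Γ_succ_le hA hW hR hf hw) hξ0.le
    rw [hM] at hΓ
    nlinarith [mul_nonneg (hθ.trans hθc) hσℓ, Vstar_le_of_le_max hA hR hε hξ hx' hθ' hθ'Γ]
  · obtain ⟨N, rfl⟩ := Nat.exists_eq_add_one.2 (by omega : 0 < N)
    have hΩ : S.nom x u (N + 1) ∈ E.Ω := mem_of_mem_pont (hR 1) <|
      hE.hωsub ((le_of_eq hM).trans (minIcc_le_ω hA hR hE hcond hx hθ hθc hf hopt))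
    have hshift := Vstar_succ_le_of_shift hA hE hW hR hf hw (by omega) hNq hΩ hθ'
    rw [hM] at hshift
    set T := ∑ j ∈ Finset.range q, S.ℓ (S.nom x u j) (u j)
    have hV : S.Vstar x θ = θ * T + S.ξ * minIcc (fun j => S.Γ (S.nom x u j)) q := hopt.symm
    have hT : 0 ≤ T - S.ℓ x (u 0) := sub_nonneg.2 (hf.stage_le_sum hA hR)
    nlinarith [mul_le_mul_of_nonneg_right hθ'θ hT,
      mul_le_mul_of_nonneg_right (hθ'θ.trans hθc) hσℓ]

end Decrease

end MPCSetup

/-- V* is a time-varying ISpS-Lyapunov function for the closed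
loop: along every closed-loop trajectory, the state stays feasible, the
optimal cost is sandwiched between class-K bounds of ‖x‖, and it decreases up
to disturbance-dependent and ε-dependent terms. -/
theorem Vstar_is_ISpS_Lyapunov {n m r : ℕ} (S : MPCSetup n m r)
    (hA : S.Assumptions) (E : S.Ext) (hE : S.ExtAssumptions E)
    (ε ν : ℝ) (hε : 0 < ε) (hν : ν ∈ Set.Ioo (0 : ℝ) 1)
    (hξ : S.ξ ≥ 2 * S.Np * S.ℓbar / (1 - S.γ))
    (hcond : S.γ * E.Γmax + max ε (ν * E.Γmax) * S.Np * S.ℓbar / S.ξ ≤ E.ω) :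
    ∃ lam : ℝ → ℝ, ClassK lam ∧
      ∀ (x : ℕ → Vec n) (θ : ℕ → ℝ) (u : ℕ → ℕ → Vec m) (q : ℕ → ℕ)
        (w : ℕ → Vec r),
        x 0 ∈ S.X → θ 0 = max ε (ν * S.Γ (x 0)) →
        (∀ k, w k ∈ S.W) →
        (∀ k, S.OptimalPair (x k) (θ k) (u k) (q k)) →
        (∀ k, x (k + 1) = S.f (x k) (u k 0) (w k)) →
        (∀ k, θ (k + 1) = S.fθ ε ν (x (k + 1)) (θ k)) →
        ∀ k,
          (x k ∈ S.X ∧ ∃ u' q', S.Feasible (x k) u' q') ∧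
            (ε * S.αℓ ‖x k‖ ≤ S.Vstar (x k) (θ k) ∧
              S.Vstar (x k) (θ k) ≤ S.ξ * S.αΓ ‖x k‖ + ε * S.Np * S.ℓbar) ∧
            S.Vstar (x (k + 1)) (θ (k + 1)) - S.Vstar (x k) (θ k) ≤
              -(ε * S.αℓ ‖x k‖) + lam ‖w k‖ + ε * S.Np * S.ℓbar := by
  refine ⟨S.ispsGain (max ε (ν * E.Γmax)), MPCSetup.ispsGain_classK hA (lt_max_of_lt_left hε),
    fun x θ u q w hx0 hθ0 hw hopt hdyn hθupd k => ?_⟩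
  have hW : (0 : Vec r) ∈ S.W := MPCSetup.zero_mem_W (hw 0)
  have hR := MPCSetup.zero_mem_Rset hE hW hA
  have hξ' : S.Np * S.ℓbar ≤ S.ξ * (1 - S.γ) := by
    have := hA.hℓbar
    nlinarith [(div_le_iff₀ (sub_pos.2 hA.hγ.2)).1 hξ]
  have hX : ∀ k, x k ∈ S.X := fun k => (hopt k).1.nom_mem hR (Nat.zero_le _)
  have hθε := MPCSetup.le_θ_of_update hθ0 hθupd
  have hθΓ := MPCSetup.θ_le_max_Γ_of_update hθ0 hθupd hA hν.2.le
  have hθ : 0 ≤ θ k := hε.le.trans (hθε k)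
  have hlow : ε * S.αℓ ‖x k‖ ≤ θ k * S.ℓ (x k) (u k 0) :=
    mul_le_mul (hθε k) (hA.hℓ_lb _ (hX k) _ ((hopt k).1.2.1 0 (hopt k).1.1.1))
      (hA.hαℓ.nonneg (norm_nonneg _)) hθ
  have hstep := MPCSetup.Vstar_succ_le hA hE hW hR hε.le hξ' hcond (hX k) (hopt k).1
    (hopt k).2.1 (hw k) (hε.le.trans (hθε (k + 1)))
    (MPCSetup.antitone_θ_of_update hθ0 hθupd hA hν.2.le k.le_succ)
    (MPCSetup.θ_le_max_Γmax_of_update hθ0 hθupd hA hE hν hx0 k) (hdyn k ▸ hθΓ (k + 1))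
  refine ⟨⟨hX k, u k, q k, (hopt k).1⟩, ⟨?_, ?_⟩, ?_⟩
  · exact hlow.trans ((hopt k).2.1 ▸ (hopt k).1.mul_stage_le_cost hA hR hθ)
  · have hΓ := mul_le_mul_of_nonneg_left (hA.hΓub _ (hX k)) hA.hξ.le
    linarith [MPCSetup.Vstar_le_of_le_max hA hR hε.le hξ' (hX k) hθ (hθΓ k)]
  · rw [hdyn k]
    linarith
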